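/- arXiv:1504.05913 — 2 statements merged into one kernel-verified Lean document; each statement's English description precedes it below -/
import Mathlib

section
/- Let δ be a quasi-trivial parameter on ℝ^(2D) and V a constrained smooth generalized vector field. Then the transport term drops from the generalized Lie derivative, i.e. (L̂_δ V)_M = Σ_K (∂_M δ^K − ∂^K δ_M) V_K, and the generalized Lie derivative along δ is nilpotent of order two on V: L̂_δ (L̂_δ V) = 0. In particular the exponentiated action truncates: e^{L̂_δ} V = V + L̂_δ V. -/
open scoped BigOperators

/-- Index set of the doubled space ℝ^(2D). -/
abbrev DoubledIdx (D : ℕ) := Fin D ⊕ Fin D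

/-- The doubled space ℝ^(2D). -/
abbrev DoubledSpace (D : ℕ) := DoubledIdx D → ℝ

/-- Partial derivative ∂_N f at x. -/
noncomputable def pd {D : ℕ} (f : DoubledSpace D → ℝ) (N : DoubledIdx D)
    (x : DoubledSpace D) : ℝ :=
  fderiv ℝ f x (Pi.single N 1)

/-- The constant O(D,D) metric η. -/
def eta (D : ℕ) : DoubledIdx D → DoubledIdx D → ℝ
  | Sum.inl i, Sum.inr j => if i = j then 1 else 0
  | Sum.inr i, Sum.inl j => if i = j then 1 else 0
  | _, _ => 0

/-- Raised-index partial derivative ∂^M f := Σ_N η^{MN} ∂_N f. -/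
noncomputable def pdUp {D : ℕ} (f : DoubledSpace D → ℝ) (M : DoubledIdx D)
    (x : DoubledSpace D) : ℝ :=
  ∑ N, eta D M N * pd f N x

/-- A constrained function: smooth and depending only on the first (inl) block. -/
def IsConstrained {D : ℕ} (f : DoubledSpace D → ℝ) : Prop :=
  ContDiff ℝ (⊤ : ℕ∞) f ∧
    ∀ x y : DoubledSpace D, (∀ i, x (Sum.inl i) = y (Sum.inl i)) → f x = f y

/-- A parameter (generalized vector field) on the doubled space, components ξ^M. -/
abbrev Param (D : ℕ) := DoubledIdx D → DoubledSpace D → ℝ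

/-- A constrained parameter: all components constrained. -/
def IsConstrainedParam {D : ℕ} (ξ : Param D) : Prop := ∀ M, IsConstrained (ξ M)

/-- A quasi-trivial parameter: δ^M = Σ_i ρ_i ∂^M σ_i. -/
def IsQuasiTrivial {D : ℕ} (δ : Param D) : Prop :=
  ∃ (r : ℕ) (ρ σ : Fin r → (DoubledSpace D → ℝ)),
    (∀ i, IsConstrained (ρ i)) ∧ (∀ i, IsConstrained (σ i)) ∧
    ∀ M x, δ M x = ∑ i, ρ i x * pdUp (σ i) M x

/-- ∂^M ξ_P := Σ_{Q,R} η^{MQ} η_{PR} ∂_Q ξ^R. -/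
noncomputable def pdUpLow {D : ℕ} (ξ : Param D) (M P : DoubledIdx D)
    (x : DoubledSpace D) : ℝ :=
  ∑ Q, ∑ R, eta D M Q * eta D P R * pd (ξ R) Q x

/-- Generalized Lie derivative (L̂_ξ V)_M. -/
noncomputable def glie {D : ℕ} (ξ V : Param D) : Param D :=
  fun M x => (∑ P, ξ P x * pd (V M) P x)
    + ∑ K, (pd (ξ K) M x - pdUpLow ξ K M x) * V K x

/-- η-transpose of a matrix: t(X)_M{}^N := Σ_{P,Q} η_{MP} η^{NQ} X_Q{}^P. -/
def etaT {D : ℕ} (X : Matrix (DoubledIdx D) (DoubledIdx D) ℝ) :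
    Matrix (DoubledIdx D) (DoubledIdx D) ℝ :=
  Matrix.of fun M N => ∑ P, ∑ Q, eta D M P * eta D N Q * X Q P

/-- The C-bracket of two parameters. -/
noncomputable def cbracket {D : ℕ} (ξ₁ ξ₂ : Param D) : Param D :=
  fun M x => (∑ P, ξ₁ P x * pd (ξ₂ M) P x) - (∑ P, ξ₂ P x * pd (ξ₁ M) P x)
    - (1/2) * ∑ P, (ξ₁ P x * pdUpLow ξ₂ M P x - ξ₂ P x * pdUpLow ξ₁ M P x)

/-- Directional derivative (ξ·∂)f. -/
noncomputable def xid {D : ℕ} (ξ : Param D) (f : DoubledSpace D → ℝ)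
    (x : DoubledSpace D) : ℝ :=
  ∑ P, ξ P x * pd f P x

/-- Iterated directional derivative (ξ·∂)^n f. -/
noncomputable def xidIter {D : ℕ} (ξ : Param D) : ℕ → (DoubledSpace D → ℝ) →
    DoubledSpace D → ℝ
  | 0, f => f
  | n+1, f => xid ξ (xidIter ξ n f)

/-- Iterated generalized Lie derivative along a fixed parameter. -/
noncomputable def glieIter {D : ℕ} (δ : Param D) : ℕ → Param D → Param D
  | 0, V => V
  | n+1, V => glie δ (glieIter δ n V)

----------------------------------------------------------------------
-- Auxiliary lemmas
----------------------------------------------------------------------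

lemma pd_zero {D : ℕ} (N : DoubledIdx D) (x : DoubledSpace D) :
    pd (fun _ => (0:ℝ)) N x = 0 := by
  simp [pd]

lemma pd_congr {D : ℕ} {f g : DoubledSpace D → ℝ} (h : ∀ x, f x = g x)
    (N : DoubledIdx D) (x : DoubledSpace D) : pd f N x = pd g N x := by
  have : f = g := funext h
  rw [this]

lemma IsConstrained.pd_inr {D : ℕ} {f : DoubledSpace D → ℝ} (hf : IsConstrained f)
    (j : Fin D) (x : DoubledSpace D) : pd f (Sum.inr j) x = 0 := by
  set v : DoubledSpace D := Pi.single (Sum.inr j) 1 with hv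
  have hg0 : x + (0:ℝ) • v = x := by simp
  have hdf : HasFDerivAt f (fderiv ℝ f x) (x + (0:ℝ) • v) := by
    rw [hg0]; exact (hf.1.differentiable (by simp) x).hasFDerivAt
  have hc : HasDerivAt (fun t : ℝ => x + t • v) v 0 := by
    simpa using ((hasDerivAt_id (0:ℝ)).smul_const v).const_add x
  have hcomp : HasDerivAt (fun t : ℝ => f (x + t • v)) (fderiv ℝ f x v) 0 :=
    hdf.comp_hasDerivAt 0 hc
  have hline : (fun t : ℝ => f (x + t • v)) = fun _ => f x := by
    funext t
    apply hf.2
    intro i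
    simp [hv, Pi.single_eq_of_ne (h := (by simp : (Sum.inl i : DoubledIdx D) ≠ Sum.inr j))]
  have hconst : HasDerivAt (fun t : ℝ => f (x + t • v)) 0 0 := by
    rw [hline]; exact hasDerivAt_const 0 (f x)
  have : fderiv ℝ f x v = 0 := hcomp.unique hconst
  simpa [pd, hv] using this

lemma IsConstrained.fderiv_eq {D : ℕ} {f : DoubledSpace D → ℝ} (hf : IsConstrained f)
    {x y : DoubledSpace D} (hxy : ∀ i, x (Sum.inl i) = y (Sum.inl i)) :
    fderiv ℝ f x = fderiv ℝ f y := by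
  have hdiff : Differentiable ℝ f := hf.1.differentiable (by simp)
  set h : DoubledSpace D := y - x with hh
  have hker : ∀ z : DoubledSpace D, f (z + h) = f z := by
    intro z
    apply hf.2
    intro i
    simp only [hh, Pi.add_apply, Pi.sub_apply]
    linarith [hxy i]
  have htrans : HasFDerivAt (fun z : DoubledSpace D => z + h)
      (ContinuousLinearMap.id ℝ (DoubledSpace D)) x := (hasFDerivAt_id x).add_const h
  have hfx : HasFDerivAt f (fderiv ℝ f (x + h)) (x + h) := (hdiff (x + h)).hasFDerivAt
  have hcomp : HasFDerivAt (fun z : DoubledSpace D => f (z + h))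
      (fderiv ℝ f (x + h)) x := by
    have := hfx.comp x htrans
    simpa [Function.comp_def] using this
  have hsame : HasFDerivAt f (fderiv ℝ f (x + h)) x := by
    have : (fun z : DoubledSpace D => f (z + h)) = f := funext hker
    rwa [this] at hcomp
  have hxh : x + h = y := by simp [hh]
  rw [hsame.fderiv, hxh]

lemma IsConstrained.pd_constrained {D : ℕ} {f : DoubledSpace D → ℝ}
    (hf : IsConstrained f) (N : DoubledIdx D) : IsConstrained (fun x => pd f N x) := by
  constructor
  · exact (hf.1.fderiv_right (by simp)).clm_apply contDiff_const
  · intro x y hxy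
    simp only [pd, hf.fderiv_eq hxy]

lemma isConstrained_const {D : ℕ} (c : ℝ) : IsConstrained (fun _ : DoubledSpace D => c) :=
  ⟨contDiff_const, fun _ _ _ => rfl⟩

lemma IsConstrained.mul {D : ℕ} {f g : DoubledSpace D → ℝ} (hf : IsConstrained f)
    (hg : IsConstrained g) : IsConstrained (fun x => f x * g x) :=
  ⟨hf.1.mul hg.1, fun x y h => by show f x * g x = f y * g y; rw [hf.2 x y h, hg.2 x y h]⟩

lemma IsConstrained.sub {D : ℕ} {f g : DoubledSpace D → ℝ} (hf : IsConstrained f)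
    (hg : IsConstrained g) : IsConstrained (fun x => f x - g x) :=
  ⟨hf.1.sub hg.1, fun x y h => by show f x - g x = f y - g y; rw [hf.2 x y h, hg.2 x y h]⟩

lemma isConstrained_sum {D : ℕ} {ι : Type*} (s : Finset ι) (f : ι → DoubledSpace D → ℝ)
    (hf : ∀ i ∈ s, IsConstrained (f i)) :
    IsConstrained (fun x => ∑ i ∈ s, f i x) := by
  constructor
  · exact ContDiff.sum fun i hi => (hf i hi).1
  · intro x y h
    exact Finset.sum_congr rfl fun i hi => (hf i hi).2 x y h

lemma IsConstrained.congr {D : ℕ} {f g : DoubledSpace D → ℝ} (hf : IsConstrained f)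
    (h : ∀ x, f x = g x) : IsConstrained g := by
  have : f = g := funext h
  rwa [this] at hf

-- pdUp of a constrained function
lemma pdUp_inr {D : ℕ} (f : DoubledSpace D → ℝ) (i : Fin D) (x : DoubledSpace D) :
    pdUp f (Sum.inr i) x = pd f (Sum.inl i) x := by
  rw [pdUp, Fintype.sum_sum_type]
  simp [eta]

lemma IsConstrained.pdUp_inl {D : ℕ} {f : DoubledSpace D → ℝ} (hf : IsConstrained f)
    (i : Fin D) (x : DoubledSpace D) : pdUp f (Sum.inl i) x = 0 := by
  rw [pdUp, Fintype.sum_sum_type]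
  simp [eta, hf.pd_inr]

section QT
variable {D : ℕ} {δ : Param D}

lemma qt_inl (hδ : IsQuasiTrivial δ) (k : Fin D) (x : DoubledSpace D) :
    δ (Sum.inl k) x = 0 := by
  obtain ⟨r, ρ, σ, hρ, hσ, hform⟩ := hδ
  rw [hform]
  apply Finset.sum_eq_zero
  intro i _
  rw [(hσ i).pdUp_inl, mul_zero]

lemma qt_constrained (hδ : IsQuasiTrivial δ) (M : DoubledIdx D) :
    IsConstrained (δ M) := by
  obtain ⟨r, ρ, σ, hρ, hσ, hform⟩ := hδ
  have key : IsConstrained (fun x => ∑ i, ρ i x * pdUp (σ i) M x) := by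
    cases M with
    | inl k =>
      refine (isConstrained_const 0).congr fun x => ?_
      symm
      apply Finset.sum_eq_zero
      intro i _
      rw [(hσ i).pdUp_inl, mul_zero]
    | inr k =>
      refine (isConstrained_sum Finset.univ
        (fun i x => ρ i x * pd (σ i) (Sum.inl k) x)
        (fun i _ => (hρ i).mul ((hσ i).pd_constrained _))).congr fun x => ?_
      exact Finset.sum_congr rfl fun i _ => by rw [pdUp_inr]
  exact key.congr fun x => (hform M x).symm

-- pd of δ-components: vanishing cases
lemma qt_pd_inl_comp (hδ : IsQuasiTrivial δ) (k : Fin D) (N : DoubledIdx D)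
    (x : DoubledSpace D) : pd (δ (Sum.inl k)) N x = 0 := by
  rw [pd_congr (fun y => qt_inl hδ k y) N x, pd_zero]

lemma qt_pd_inr_dir (hδ : IsQuasiTrivial δ) (K : DoubledIdx D) (j : Fin D)
    (x : DoubledSpace D) : pd (δ K) (Sum.inr j) x = 0 :=
  (qt_constrained hδ K).pd_inr j x

-- pdUpLow vanishing
lemma qt_pdUpLow_inl_left (hδ : IsQuasiTrivial δ) (k : Fin D) (M : DoubledIdx D)
    (x : DoubledSpace D) : pdUpLow δ (Sum.inl k) M x = 0 := by
  rw [pdUpLow]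
  apply Finset.sum_eq_zero
  intro Q _
  apply Finset.sum_eq_zero
  intro R _
  cases Q with
  | inl q => simp [eta]
  | inr q => rw [qt_pd_inr_dir hδ, mul_zero]

lemma qt_pdUpLow_inr_right (hδ : IsQuasiTrivial δ) (K : DoubledIdx D) (m : Fin D)
    (x : DoubledSpace D) : pdUpLow δ K (Sum.inr m) x = 0 := by
  rw [pdUpLow]
  apply Finset.sum_eq_zero
  intro Q _
  apply Finset.sum_eq_zero
  intro R _
  cases R with
  | inl r => rw [qt_pd_inl_comp hδ, mul_zero]
  | inr r => simp [eta]

-- pdUpLow is constrained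
lemma qt_pdUpLow_constrained (hδ : IsQuasiTrivial δ) (K M : DoubledIdx D) :
    IsConstrained (fun x => pdUpLow δ K M x) := by
  apply isConstrained_sum
  intro Q _
  apply isConstrained_sum
  intro R _
  exact ((isConstrained_const (eta D K Q * eta D M R)).mul
    ((qt_constrained hδ R).pd_constrained Q)).congr fun x => by ring

-- F_M^K := pd (δ K) M - pdUpLow δ K M  vanishes unless (M = inl, K = inr)
lemma qt_F_inl (hδ : IsQuasiTrivial δ) (k : Fin D) (M : DoubledIdx D)
    (x : DoubledSpace D) :
    pd (δ (Sum.inl k)) M x - pdUpLow δ (Sum.inl k) M x = 0 := by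
  rw [qt_pd_inl_comp hδ, qt_pdUpLow_inl_left hδ, sub_zero]

lemma qt_F_inr_inr (hδ : IsQuasiTrivial δ) (k m : Fin D) (x : DoubledSpace D) :
    pd (δ (Sum.inr k)) (Sum.inr m) x - pdUpLow δ (Sum.inr k) (Sum.inr m) x = 0 := by
  rw [qt_pd_inr_dir hδ, qt_pdUpLow_inr_right hδ, sub_zero]

-- transport term drops
lemma qt_transport (hδ : IsQuasiTrivial δ) (W : Param D)
    (hW : ∀ M, IsConstrained (W M)) (M : DoubledIdx D) (x : DoubledSpace D) :
    glie δ W M x = ∑ K, (pd (δ K) M x - pdUpLow δ K M x) * W K x := by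
  rw [glie]
  have : (∑ P, δ P x * pd (W M) P x) = 0 := by
    apply Finset.sum_eq_zero
    intro P _
    cases P with
    | inl p => rw [qt_inl hδ, zero_mul]
    | inr p => rw [(hW M).pd_inr, mul_zero]
  rw [this, zero_add]

lemma glie_zero_of (δ P : Param D) (hP : ∀ M x, P M x = 0)
    (M : DoubledIdx D) (x : DoubledSpace D) : glie δ P M x = 0 := by
  rw [glie]
  have h1 : (∑ Q, δ Q x * pd (P M) Q x) = 0 := by
    apply Finset.sum_eq_zero
    intro Q _
    rw [pd_congr (fun y => hP M y) Q x, pd_zero, mul_zero]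
  have h2 : (∑ K, (pd (δ K) M x - pdUpLow δ K M x) * P K x) = 0 := by
    apply Finset.sum_eq_zero
    intro K _
    rw [hP K x, mul_zero]
  rw [h1, h2, add_zero]

end QT


/-- Along a quasi-trivial parameter the transport term drops from the generalized Lie
derivative, the generalized Lie derivative is nilpotent of order two on constrained
vector fields, and hence its exponential truncates: e^{L̂_δ} V = V + L̂_δ V. -/
theorem stmt_4 {D : ℕ} (δ V : Param D) (hδ : IsQuasiTrivial δ)
    (hV : IsConstrainedParam V) :
    (∀ (M : DoubledIdx D) (x : DoubledSpace D),
      glie δ V M x = ∑ K, (pd (δ K) M x - pdUpLow δ K M x) * V K x) ∧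
    (∀ (M : DoubledIdx D) (x : DoubledSpace D), glie δ (glie δ V) M x = 0) ∧
    (∀ (M : DoubledIdx D) (x : DoubledSpace D),
      (∑' n : ℕ, ((n.factorial : ℝ))⁻¹ * glieIter δ n V M x) = V M x + glie δ V M x) := by
  have part1 : ∀ (M : DoubledIdx D) (x : DoubledSpace D),
      glie δ V M x = ∑ K, (pd (δ K) M x - pdUpLow δ K M x) * V K x :=
    fun M x => qt_transport hδ V hV M x
  have hWc : ∀ M, IsConstrained (glie δ V M) := by
    intro M
    refine (isConstrained_sum Finset.univ
      (fun K x => (pd (δ K) M x - pdUpLow δ K M x) * V K x) ?_).congr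
      fun x => (part1 M x).symm
    intro K _
    exact (((qt_constrained hδ K).pd_constrained M).sub
      (qt_pdUpLow_constrained hδ K M)).mul (hV K)
  have hWinr : ∀ (k : Fin D) (x : DoubledSpace D), glie δ V (Sum.inr k) x = 0 := by
    intro k x
    rw [part1]
    apply Finset.sum_eq_zero
    intro K _
    cases K with
    | inl q => rw [qt_F_inl hδ, zero_mul]
    | inr q => rw [qt_F_inr_inr hδ, zero_mul]
  have part2 : ∀ (M : DoubledIdx D) (x : DoubledSpace D),
      glie δ (glie δ V) M x = 0 := by
    intro M x
    rw [qt_transport hδ (glie δ V) hWc M x]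
    apply Finset.sum_eq_zero
    intro K _
    cases K with
    | inl q => rw [qt_F_inl hδ, zero_mul]
    | inr q => rw [hWinr q x, mul_zero]
  have hiter : ∀ n (M : DoubledIdx D) (x : DoubledSpace D),
      glieIter δ (n+2) V M x = 0 := by
    intro n
    induction n with
    | zero =>
        intro M x
        show glie δ (glie δ (glieIter δ 0 V)) M x = 0
        exact part2 M x
    | succ n ih =>
        intro M x
        show glie δ (glieIter δ (n+2) V) M x = 0
        exact glie_zero_of δ _ ih M x
  refine ⟨part1, part2, ?_⟩
  intro M x
  have hzero : ∀ n ∉ ({0, 1} : Finset ℕ),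
      ((n.factorial : ℝ))⁻¹ * glieIter δ n V M x = 0 := by
    intro n hn
    match n, hn with
    | 0, hn => simp at hn
    | 1, hn => simp at hn
    | (k+2), _ => rw [hiter k M x, mul_zero]
  rw [tsum_eq_sum hzero]
  simp [glieIter, Nat.factorial]
end

section
/- Let ξ be a constrained smooth parameter on ℝ^(2D). Define the matrix-valued functions a := ∂ξ (a_M{}^N = ∂_M ξ^N), ζ₂ := −½ (ξ·∂)ξ, A₂ := ∂ζ₂, the parameter χ₃^N := −(1/12) Σ_P ((ξ·∂)ξ^P)(∂^N ξ_P), and Δ₃ := ∂χ₃. Then at every point 3·(Δ₃ − t(Δ₃)) = ½·( A₂·t(a) − a·t(A₂) ), where t denotes the η-transpose. (This is the cubic-order solution of the iterative equation, giving ξ' = ξ − (1/12)(ξ·∂ξ^P)∂^M ξ_P + O(ξ⁴).) -/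
open scoped BigOperators

section Helpers

variable {D : ℕ}

lemma eta_apply' (D : ℕ) (M N : DoubledIdx D) :
    eta D M N = if N = Sum.swap M then 1 else 0 := by
  cases M <;> cases N <;> simp [eta, Sum.swap, eq_comm]

lemma sum_eta_mul {D : ℕ} (g : DoubledIdx D → ℝ) (M : DoubledIdx D) :
    ∑ N, eta D M N * g N = g (Sum.swap M) := by
  simp [eta_apply', ite_mul, Finset.sum_ite_eq']

lemma contDiff_pd {f : DoubledSpace D → ℝ} (hf : ContDiff ℝ (⊤ : ℕ∞) f)
    (N : DoubledIdx D) : ContDiff ℝ (⊤ : ℕ∞) (pd f N) :=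
  (hf.fderiv_right (by simp)).clm_apply contDiff_const

lemma pd_sum {ι : Type*} (s : Finset ι) (g : ι → DoubledSpace D → ℝ)
    (N : DoubledIdx D) (x : DoubledSpace D)
    (hg : ∀ i ∈ s, DifferentiableAt ℝ (g i) x) :
    pd (fun y => ∑ i ∈ s, g i y) N x = ∑ i ∈ s, pd (g i) N x := by
  unfold pd
  rw [fderiv_fun_sum hg]
  simp

lemma pd_const_mul (c : ℝ) {f : DoubledSpace D → ℝ} {x : DoubledSpace D}
    (hf : DifferentiableAt ℝ f x) (N : DoubledIdx D) :
    pd (fun y => c * f y) N x = c * pd f N x := by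
  unfold pd
  rw [fderiv_const_mul hf]
  simp

lemma pd_mul {f g : DoubledSpace D → ℝ} {x : DoubledSpace D}
    (hf : DifferentiableAt ℝ f x) (hg : DifferentiableAt ℝ g x) (N : DoubledIdx D) :
    pd (fun y => f y * g y) N x = pd f N x * g x + f x * pd g N x := by
  unfold pd
  rw [fderiv_fun_mul hf hg]
  simp
  ring

lemma pd_pd_comm {f : DoubledSpace D → ℝ} (hf : ContDiff ℝ (⊤ : ℕ∞) f)
    (M N : DoubledIdx D) (x : DoubledSpace D) :
    pd (pd f N) M x = pd (pd f M) N x := by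
  have hdf : ContDiff ℝ (⊤ : ℕ∞) (fderiv ℝ f) := hf.fderiv_right (by simp)
  have h1 : ∀ (K L : DoubledIdx D),
      pd (pd f K) L x = fderiv ℝ (fderiv ℝ f) x (Pi.single L 1) (Pi.single K 1) := by
    intro K L
    show fderiv ℝ (fun y => (fderiv ℝ f y) (Pi.single K 1)) x (Pi.single L 1) = _
    rw [fderiv_clm_apply (hdf.differentiable (by simp)).differentiableAt
      (differentiableAt_const _)]
    simp
  rw [h1 N M, h1 M N]
  exact second_derivative_symmetric
    (fun y => ((hf.differentiable (by simp)) y).hasFDerivAt)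
    ((hdf.differentiable (by simp)) x).hasFDerivAt _ _

lemma pdUpLow_eq (ξ : Param D) (M P : DoubledIdx D) (x : DoubledSpace D) :
    pdUpLow ξ M P x = pd (ξ (Sum.swap P)) (Sum.swap M) x := by
  unfold pdUpLow
  have h : ∀ Q, ∑ R, eta D M Q * eta D P R * pd (ξ R) Q x
      = eta D M Q * pd (ξ (Sum.swap P)) Q x := by
    intro Q
    rw [← sum_eta_mul (fun R => pd (ξ R) Q x) P, Finset.mul_sum]
    exact Finset.sum_congr rfl fun R _ => by ring
  rw [Finset.sum_congr rfl fun Q _ => h Q]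
  exact sum_eta_mul (fun Q => pd (ξ (Sum.swap P)) Q x) M

lemma etaT_apply (X : Matrix (DoubledIdx D) (DoubledIdx D) ℝ) (M N : DoubledIdx D) :
    etaT X M N = X (Sum.swap N) (Sum.swap M) := by
  show ∑ P, ∑ Q, eta D M P * eta D N Q * X Q P = _
  have h : ∀ P, ∑ Q, eta D M P * eta D N Q * X Q P
      = eta D M P * X (Sum.swap N) P := by
    intro P
    rw [← sum_eta_mul (fun Q => X Q P) N, Finset.mul_sum]
    exact Finset.sum_congr rfl fun Q _ => by ring
  rw [Finset.sum_congr rfl fun P _ => h P]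
  exact sum_eta_mul (fun P => X (Sum.swap N) P) M

end Helpers

/-- Cubic-order solution of the iterative equation:
3(Δ₃ − t(Δ₃)) = ½(A₂ t(a) − a t(A₂)), where a = ∂ξ, ζ₂ = −½(ξ·∂)ξ, A₂ = ∂ζ₂,
χ₃^N = −(1/12) Σ_P ((ξ·∂)ξ^P)(∂^N ξ_P) and Δ₃ = ∂χ₃. -/
theorem stmt_15 {D : ℕ} (ξ : Param D) (hξ : IsConstrainedParam ξ)
    (ζ₂ χ₃ : Param D)
    (hζ₂ : ∀ N y, ζ₂ N y = -(1/2) * xid ξ (ξ N) y)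
    (hχ₃ : ∀ N y, χ₃ N y = -(1/12) * ∑ P, xid ξ (ξ P) y * pdUpLow ξ N P y)
    (x : DoubledSpace D)
    (a A₂ Δ₃ : Matrix (DoubledIdx D) (DoubledIdx D) ℝ)
    (ha : a = Matrix.of fun M N => pd (ξ N) M x)
    (hA₂ : A₂ = Matrix.of fun M N => pd (ζ₂ N) M x)
    (hΔ₃ : Δ₃ = Matrix.of fun M N => pd (χ₃ N) M x) :
    (3 : ℝ) • (Δ₃ - etaT Δ₃) = (1/2 : ℝ) • (A₂ * etaT a - a * etaT A₂) := by
  classical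
  have hC : ∀ P, ContDiff ℝ (⊤ : ℕ∞) (ξ P) := fun P => (hξ P).1
  have hF : ∀ P, ContDiff ℝ (⊤ : ℕ∞) (xid ξ (ξ P)) := by
    intro P
    unfold xid
    exact ContDiff.sum fun Q _ => (hC Q).mul (contDiff_pd (hC P) Q)
  have hae : ∀ M N, a M N = pd (ξ N) M x := by
    intro M N; rw [ha]; rfl
  have hAe : ∀ M N, A₂ M N = -(1/2) * pd (xid ξ (ξ N)) M x := by
    intro M N
    rw [hA₂]
    show pd (ζ₂ N) M x = _
    have h : ζ₂ N = fun y => -(1/2) * xid ξ (ξ N) y := funext fun y => hζ₂ N y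
    rw [h, pd_const_mul _ ((hF N).differentiable (by simp)).differentiableAt]
  have hDe : ∀ M N, Δ₃ M N = -(1/12) * ∑ P,
      (pd (xid ξ (ξ P)) M x * pd (ξ (Sum.swap P)) (Sum.swap N) x
        + xid ξ (ξ P) x * pd (pd (ξ (Sum.swap P)) (Sum.swap N)) M x) := by
    intro M N
    rw [hΔ₃]
    show pd (χ₃ N) M x = _
    have hfun : χ₃ N = fun y => -(1/12) * ∑ P,
        (xid ξ (ξ P) y * pd (ξ (Sum.swap P)) (Sum.swap N) y) := by
      funext y
      rw [hχ₃]
      congr 1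
      exact Finset.sum_congr rfl fun P _ => by rw [pdUpLow_eq]
    have hd : ∀ P : DoubledIdx D, DifferentiableAt ℝ
        (fun y => xid ξ (ξ P) y * pd (ξ (Sum.swap P)) (Sum.swap N) y) x := by
      intro P
      exact (((hF P).differentiable (by simp)).differentiableAt).mul
        (((contDiff_pd (hC (Sum.swap P)) (Sum.swap N)).differentiable
          (by simp)).differentiableAt)
    rw [hfun, pd_const_mul _ (by exact DifferentiableAt.fun_sum fun P _ => hd P) M,
      pd_sum _ _ _ _ (fun P _ => hd P)]
    congr 1
    refine Finset.sum_congr rfl fun P _ => ?_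
    exact pd_mul ((hF P).differentiable (by simp)).differentiableAt
      ((contDiff_pd (hC (Sum.swap P)) (Sum.swap N)).differentiable
        (by simp)).differentiableAt M
  ext M N
  simp only [Matrix.smul_apply, Matrix.sub_apply, smul_eq_mul, Matrix.mul_apply,
    etaT_apply]
  rw [hDe M N, hDe (Sum.swap N) (Sum.swap M)]
  simp only [Sum.swap_swap, hAe, hae]
  have key : (∑ P, (pd (xid ξ (ξ P)) M x * pd (ξ (Sum.swap P)) (Sum.swap N) x
        + xid ξ (ξ P) x * pd (pd (ξ (Sum.swap P)) (Sum.swap N)) M x))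
      - (∑ P, (pd (xid ξ (ξ P)) (Sum.swap N) x * pd (ξ (Sum.swap P)) M x
        + xid ξ (ξ P) x * pd (pd (ξ (Sum.swap P)) M) (Sum.swap N) x))
      = (∑ P, pd (xid ξ (ξ P)) M x * pd (ξ (Sum.swap P)) (Sum.swap N) x)
      - (∑ P, pd (xid ξ (ξ P)) (Sum.swap N) x * pd (ξ (Sum.swap P)) M x) := by
    rw [← Finset.sum_sub_distrib, ← Finset.sum_sub_distrib]
    refine Finset.sum_congr rfl fun P _ => ?_
    rw [pd_pd_comm (hC (Sum.swap P)) M (Sum.swap N) x]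
    ring
  have hre : ∑ K, pd (ξ K) M x * pd (xid ξ (ξ (Sum.swap K))) (Sum.swap N) x
      = ∑ K, pd (xid ξ (ξ K)) (Sum.swap N) x * pd (ξ (Sum.swap K)) M x := by
    rw [← Equiv.sum_comp (Equiv.sumComm (Fin D) (Fin D))
      (fun K => pd (xid ξ (ξ K)) (Sum.swap N) x * pd (ξ (Sum.swap K)) M x)]
    refine Finset.sum_congr rfl fun K _ => ?_
    simp [Equiv.sumComm_apply, mul_comm]
  have r1 : ∑ K, -(1/2) * pd (xid ξ (ξ K)) M x * pd (ξ (Sum.swap K)) (Sum.swap N) x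
      = -(1/2) * ∑ K, pd (xid ξ (ξ K)) M x * pd (ξ (Sum.swap K)) (Sum.swap N) x := by
    rw [Finset.mul_sum]
    exact Finset.sum_congr rfl fun K _ => by ring
  have r2 : ∑ K, pd (ξ K) M x * (-(1/2) * pd (xid ξ (ξ (Sum.swap K))) (Sum.swap N) x)
      = -(1/2) * ∑ K, pd (ξ K) M x * pd (xid ξ (ξ (Sum.swap K))) (Sum.swap N) x := by
    rw [Finset.mul_sum]
    exact Finset.sum_congr rfl fun K _ => by ring
  rw [r1, r2, hre]
  linarith [key]
end
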